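/- There are exactly 155 subloops of T_L of cardinality 8, exactly 31 subloops of cardinality 4, and exactly one subloop of cardinality 2, namely {e₀, −e₀}. -/

import Mathlib

/-- Iterated Cayley–Dickson doubling starting from `ℝ`. -/
def CD : ℕ → Type
  | 0 => ℝ
  | n + 1 => CD n × CD n

instance cdAddCommGroup : ∀ n, AddCommGroup (CD n)
  | 0 => inferInstanceAs (AddCommGroup ℝ)
  | n + 1 => letI := cdAddCommGroup n; inferInstanceAs (AddCommGroup (CD n × CD n))

noncomputable instance cdModule : ∀ n, Module ℝ (CD n)
  | 0 => inferInstanceAs (Module ℝ ℝ)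
  | n + 1 => letI := cdModule n; inferInstanceAs (Module ℝ (CD n × CD n))

/-- Cayley–Dickson conjugation, starting from the identity on `ℝ`. -/
def cdConj : ∀ n, CD n → CD n
  | 0, x => x
  | n + 1, x => (cdConj n x.1, -x.2)

/-- Cayley–Dickson multiplication: `(a,b)(c,d) = (ac − d b̄, ā d + c b)`. -/
def cdMul : ∀ n, CD n → CD n → CD n
  | 0, x, y => @Mul.mul ℝ _ x y
  | n + 1, x, y =>
      (cdMul n x.1 y.1 - cdMul n y.2 (cdConj n x.2),
       cdMul n (cdConj n x.1) y.2 + cdMul n y.1 x.2)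

instance cdMulInst (n : ℕ) : Mul (CD n) := ⟨cdMul n⟩

instance cdOne : ∀ n, One (CD n)
  | 0 => ⟨(1 : ℝ)⟩
  | n + 1 => letI := cdOne n; ⟨((1 : CD n), 0)⟩

/-- The standard basis elements: under a doubling step `A → A × A`, a basis element
`e k` of `A` gives `e k = (e k, 0)` and `e (k + dim A) = (0, e k)`. -/
def cdE : ∀ n, ℕ → CD n
  | 0, _ => (1 : ℝ)
  | n + 1, k => if k < 2 ^ n then (cdE n k, 0) else (0, cdE n (k - 2 ^ n))

/-- The trigintaduonions: the 32-dimensional real Cayley–Dickson algebra. -/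
abbrev TT := CD 5

/-- The 32 standard basis elements `e 0 = 1, e 1, …, e 31` of `𝕋`. -/
def e (i : ℕ) : TT := cdE 5 i

/-- The trigintaduonion loop `T_L = {±e 0, ±e 1, …, ±e 31}`. -/
def TL : Set TT := {x | ∃ i < 32, x = e i ∨ x = -e i}

/-- A subloop of `T_L`: a nonempty subset of `T_L` closed under multiplication. -/
def IsSubloop (N : Set TT) : Prop :=
  N ⊆ TL ∧ N.Nonempty ∧ ∀ x ∈ N, ∀ y ∈ N, x * y ∈ N

/-- Two subsets of `T_L` are isomorphic (as loops) if some bijection between them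
preserves multiplication. -/
def LoopIso (A B : Set TT) : Prop :=
  ∃ f : TT → TT, Set.BijOn f A B ∧ ∀ x ∈ A, ∀ y ∈ A, f (x * y) = f x * f y

/-!
The basis elements of `𝕋` multiply like the elementary abelian group `(ℤ/2)⁵` up to sign:
`e i * e j = ±e (i ^^^ j)`, with `e 0 = 1` and `e i * e i = -1` for `i ≠ 0`. Squaring an element
of a subloop `N` therefore puts `±1` in `N`, hence `1`; if `N ≠ {1}` it contains some `±e i` with
`i ≠ 0`, whose square is `-1`, so `N` is closed under negation. Then `N = {±e i | i ∈ S}` for the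
xor-closed set `S = {i | e i ∈ N}`, and `|N| = 2 |S|`. Subloops of order 2, 4 and 8 thus
correspond to subgroups of `(ℤ/2)⁵` of order 1, 2 and 4. There are 1, 31 and 155 of these; a
subgroup `{0, a, b, c}` of order 4 is counted by its two smallest nonzero elements `a < b`, which
satisfy `b < a ^^^ b = c`.
-/

theorem Nat.add_two_pow_eq_xor {a n : ℕ} (h : a < 2 ^ n) : a + 2 ^ n = a ^^^ 2 ^ n := by
  rw [← Nat.or_two_pow_eq_add_of_lt h]
  refine Nat.eq_of_testBit_eq fun k => ?_
  rw [Nat.testBit_or, Nat.testBit_xor, Nat.testBit_two_pow]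
  rcases eq_or_ne n k with rfl | hk
  · simp [Nat.testBit_lt_two_pow h]
  · simp [hk]

theorem Nat.lt_two_pow_or_eq_xor_two_pow {i n : ℕ} (h : i < 2 ^ (n + 1)) :
    i < 2 ^ n ∨ ∃ i' < 2 ^ n, i = i' ^^^ 2 ^ n := by
  rw [pow_succ] at h
  refine (lt_or_ge i (2 ^ n)).imp_right fun hi => ⟨i - 2 ^ n, by omega, ?_⟩
  rw [← Nat.add_two_pow_eq_xor (by omega)]
  omega

namespace Fin

variable {n k : ℕ} [NeZero k]

theorem zero_xor (a : Fin k) : 0 ^^^ a = a := by rw [xor_comm, xor_zero]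

theorem xor_xor_cancel_left (h : k = 2 ^ n) (a b : Fin k) : a ^^^ (a ^^^ b) = b := by
  rw [← xor_assoc h, xor_self, zero_xor]

theorem xor_xor_cancel_right (h : k = 2 ^ n) (a b : Fin k) : a ^^^ (b ^^^ a) = b := by
  rw [xor_comm b, xor_xor_cancel_left h]

theorem xor_eq_zero_iff (h : k = 2 ^ n) {a b : Fin k} : a ^^^ b = 0 ↔ a = b :=
  ⟨fun hab => by rw [← xor_xor_cancel_left h a b, hab, xor_zero], fun hab => hab ▸ xor_self a⟩

end Fin

theorem Finset.exists_lt_lt_eq_of_card_eq_three {α : Type*} [LinearOrder α] {T : Finset α}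
    (h : T.card = 3) : ∃ a b c, a < b ∧ b < c ∧ T = {a, b, c} := by
  have hf := (T.orderEmbOfFin h).strictMono
  refine ⟨_, _, _, hf (show (0 : Fin 3) < 1 by decide), hf (show (1 : Fin 3) < 2 by decide), ?_⟩
  conv_lhs => rw [← T.image_orderEmbOfFin_univ h]
  simp [Fin.univ_succ, Finset.image_insert]

theorem Finset.eq_of_sorted_triple_eq {α : Type*} [LinearOrder α] {a b c a' b' c' : α}
    (hab : a < b) (hbc : b < c) (hab' : a' < b') (hbc' : b' < c')
    (h : ({a, b, c} : Finset α) = {a', b', c'}) : a = a' ∧ b = b' := by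
  have hcard : ({a, b, c} : Finset α).card = 3 := by
    rw [card_insert_of_notMem (by simp [hab.ne, (hab.trans hbc).ne]), card_pair hbc.ne]
  have hmono : StrictMono ![a, b, c] := by simp [strictMono_vecCons, hab, hbc]
  have hmono' : StrictMono ![a', b', c'] := by simp [strictMono_vecCons, hab', hbc']
  have h1 := orderEmbOfFin_unique hcard (by simp [Fin.forall_fin_succ]) hmono
  have h2 := orderEmbOfFin_unique hcard (by simp [h, Fin.forall_fin_succ]) hmono'
  rw [← h2] at h1
  exact ⟨congrFun h1 0, congrFun h1 1⟩

section Sign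

variable {α : Type*} {x y z : α}

theorem eq_or_eq_neg_comm [InvolutiveNeg α] : x = y ∨ x = -y ↔ y = x ∨ y = -x :=
  or_congr eq_comm (neg_eq_iff_eq_neg.symm.trans eq_comm)

theorem eq_or_eq_neg_trans [InvolutiveNeg α] (hxy : x = y ∨ x = -y) (hyz : y = z ∨ y = -z) :
    x = z ∨ x = -z := by
  rcases hxy with rfl | rfl <;> rcases hyz with rfl | rfl <;> simp

theorem eq_or_eq_neg_mul [Mul α] [HasDistribNeg α] {a b : α} (hx : x = a ∨ x = -a)
    (hy : y = b ∨ y = -b) : x * y = a * b ∨ x * y = -(a * b) := by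
  rcases hx with rfl | rfl <;> rcases hy with rfl | rfl <;> simp

end Sign

namespace CD

variable {n : ℕ}

def mk (a b : CD n) : CD (n + 1) := (a, b)

theorem exists_eq_mk (x : CD (n + 1)) : ∃ a b : CD n, x = mk a b := ⟨x.1, x.2, rfl⟩

theorem mk_inj {a b c d : CD n} : mk a b = mk c d ↔ a = c ∧ b = d := Prod.mk_inj

theorem mk_add_mk (a b c d : CD n) : mk a b + mk c d = mk (a + c) (b + d) := rfl

theorem neg_mk (a b : CD n) : -mk a b = mk (-a) (-b) := rfl

theorem mk_zero_zero : mk (0 : CD n) 0 = 0 := rfl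

theorem mk_one_zero : mk (1 : CD n) 0 = 1 := rfl

theorem mk_mul_mk (a b c d : CD n) :
    mk a b * mk c d = mk (a * c - d * cdConj n b) (cdConj n a * d + c * b) := rfl

end CD

theorem cdConj_mk {n : ℕ} (a b : CD n) : cdConj (n + 1) (CD.mk a b) = CD.mk (cdConj n a) (-b) :=
  rfl

theorem cdConj_add : ∀ {n : ℕ} (x y : CD n), cdConj n (x + y) = cdConj n x + cdConj n y
  | 0, _, _ => rfl
  | n + 1, x, y => by
    obtain ⟨a, b, rfl⟩ := CD.exists_eq_mk x
    obtain ⟨c, d, rfl⟩ := CD.exists_eq_mk y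
    rw [CD.mk_add_mk, cdConj_mk, cdConj_mk, cdConj_mk, CD.mk_add_mk, cdConj_add, neg_add]

theorem cdConj_zero : ∀ {n : ℕ}, cdConj n (0 : CD n) = 0
  | 0 => rfl
  | n + 1 => by rw [← CD.mk_zero_zero, cdConj_mk, cdConj_zero, neg_zero]

theorem cdConj_one : ∀ {n : ℕ}, cdConj n (1 : CD n) = 1
  | 0 => rfl
  | n + 1 => by rw [← CD.mk_one_zero, cdConj_mk, cdConj_one, neg_zero]

namespace CD

variable {n : ℕ}

theorem mul_add_and_add_mul : ∀ {n : ℕ}, (∀ x y z : CD n, x * (y + z) = x * y + x * z) ∧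
    (∀ x y z : CD n, (x + y) * z = x * z + y * z)
  | 0 => ⟨mul_add (R := ℝ), add_mul (R := ℝ)⟩
  | n + 1 => by
    obtain ⟨mul_add, add_mul⟩ := mul_add_and_add_mul (n := n)
    refine ⟨fun x y z => ?_, fun x y z => ?_⟩ <;>
    obtain ⟨a, b, rfl⟩ := exists_eq_mk x <;>
    obtain ⟨c, d, rfl⟩ := exists_eq_mk y <;>
    obtain ⟨c', d', rfl⟩ := exists_eq_mk z <;>
    simp only [mk_add_mk, mk_mul_mk, cdConj_add, mul_add, add_mul, mk_inj] <;>
    constructor <;> abel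

theorem mul_zero (x : CD n) : x * 0 = 0 := by
  have h := mul_add_and_add_mul.1 x 0 0
  rwa [add_zero, left_eq_add] at h

theorem zero_mul (x : CD n) : 0 * x = 0 := by
  have h := mul_add_and_add_mul.2 0 0 x
  rwa [add_zero, left_eq_add] at h

theorem one_mul : ∀ {n : ℕ} (x : CD n), 1 * x = x
  | 0, x => _root_.one_mul (M := ℝ) x
  | n + 1, x => by
    obtain ⟨a, b, rfl⟩ := exists_eq_mk x
    rw [← mk_one_zero, mk_mul_mk, cdConj_one, cdConj_zero, one_mul, one_mul, mul_zero, mul_zero,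
      sub_zero, add_zero]

theorem mul_one : ∀ {n : ℕ} (x : CD n), x * 1 = x
  | 0, x => _root_.mul_one (M := ℝ) x
  | n + 1, x => by
    obtain ⟨a, b, rfl⟩ := exists_eq_mk x
    rw [← mk_one_zero, mk_mul_mk, mul_one, one_mul, zero_mul, mul_zero, sub_zero, zero_add]

instance : NonAssocRing (CD n) where
  __ := cdAddCommGroup n
  mul := (· * ·)
  one := 1
  left_distrib := mul_add_and_add_mul.1
  right_distrib := mul_add_and_add_mul.2
  zero_mul := zero_mul
  mul_zero := mul_zero
  one_mul := one_mul
  mul_one := mul_one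

instance : Nontrivial (CD n) := by
  refine ⟨⟨1, 0, ?_⟩⟩
  induction n with
  | zero => exact one_ne_zero (α := ℝ)
  | succ n ih => rw [← mk_one_zero, ← mk_zero_zero, Ne, mk_inj]; exact fun h => ih h.1

end CD

section Basis

open CD

variable {n i j : ℕ}

theorem cdE_succ_of_lt (h : i < 2 ^ n) : cdE (n + 1) i = mk (cdE n i) 0 := if_pos h

theorem cdE_succ_xor_two_pow (h : i < 2 ^ n) : cdE (n + 1) (i ^^^ 2 ^ n) = mk 0 (cdE n i) := by
  rw [← Nat.add_two_pow_eq_xor h]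
  exact (if_neg (by omega)).trans (by rw [Nat.add_sub_cancel]; rfl)

theorem cdE_zero : ∀ {n : ℕ}, cdE n 0 = 1
  | 0 => rfl
  | n + 1 => by rw [cdE_succ_of_lt (Nat.two_pow_pos n), cdE_zero, mk_one_zero]

theorem cdConj_cdE_of_ne_zero : ∀ {n i : ℕ}, i < 2 ^ n → i ≠ 0 → cdConj n (cdE n i) = -cdE n i
  | 0, i, hi, h0 => by omega
  | n + 1, i, hi₁, h0 => by
    rcases Nat.lt_two_pow_or_eq_xor_two_pow hi₁ with hi | ⟨i, hi, rfl⟩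
    · rw [cdE_succ_of_lt hi, cdConj_mk, cdConj_cdE_of_ne_zero hi h0, neg_mk, neg_zero]
    · rw [cdE_succ_xor_two_pow hi, cdConj_mk, cdConj_zero, neg_mk, neg_zero]

theorem cdConj_cdE (hi : i < 2 ^ n) :
    cdConj n (cdE n i) = cdE n i ∨ cdConj n (cdE n i) = -cdE n i := by
  rcases eq_or_ne i 0 with rfl | h0
  · exact .inl (by rw [cdE_zero, cdConj_one])
  · exact .inr (cdConj_cdE_of_ne_zero hi h0)

theorem cdE_mul_cdConj : ∀ {n i : ℕ}, i < 2 ^ n → cdE n i * cdConj n (cdE n i) = 1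
  | 0, i, _ => by rw [show cdE 0 i = 1 from rfl, cdConj_one, mul_one]
  | n + 1, i, hi₁ => by
    rcases Nat.lt_two_pow_or_eq_xor_two_pow hi₁ with hi | ⟨i, hi, rfl⟩
    · rw [cdE_succ_of_lt hi, cdConj_mk, mk_mul_mk, cdE_mul_cdConj hi]
      simp [← mk_one_zero]
    · rw [cdE_succ_xor_two_pow hi, cdConj_mk, mk_mul_mk]
      simp [cdConj_zero, cdE_mul_cdConj hi, ← mk_one_zero]

theorem cdE_mul_self (hi : i < 2 ^ n) (h0 : i ≠ 0) : cdE n i * cdE n i = -1 := by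
  rw [← neg_neg (cdE n i * _), ← mul_neg, ← cdConj_cdE_of_ne_zero hi h0, cdE_mul_cdConj hi]

theorem cdE_mul_cdE : ∀ {n i j : ℕ}, i < 2 ^ n → j < 2 ^ n →
    cdE n i * cdE n j = cdE n (i ^^^ j) ∨ cdE n i * cdE n j = -cdE n (i ^^^ j)
  | 0, i, j, hi, hj => by
    simp only [pow_zero, Nat.lt_one_iff] at hi hj
    subst hi hj
    simp [cdE_zero]
  | n + 1, i, j, hi₁, hj₁ => by
    rcases Nat.lt_two_pow_or_eq_xor_two_pow hi₁ with hi | ⟨i, hi, rfl⟩ <;>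
    rcases Nat.lt_two_pow_or_eq_xor_two_pow hj₁ with hj | ⟨j, hj, rfl⟩
    · rw [cdE_succ_of_lt hi, cdE_succ_of_lt hj, cdE_succ_of_lt (Nat.xor_lt_two_pow hi hj),
        mk_mul_mk]
      rcases cdE_mul_cdE hi hj with h | h <;> simp [h, cdConj_zero, neg_mk]
    · rw [cdE_succ_of_lt hi, cdE_succ_xor_two_pow hj, ← Nat.xor_assoc,
        cdE_succ_xor_two_pow (Nat.xor_lt_two_pow hi hj), mk_mul_mk]
      rcases cdConj_cdE hi with h | h <;> rcases cdE_mul_cdE hi hj with h' | h' <;>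
        simp [h, h', cdConj_zero, neg_mk]
    · rw [cdE_succ_xor_two_pow hi, cdE_succ_of_lt hj, Nat.xor_right_comm, Nat.xor_comm i,
        cdE_succ_xor_two_pow (Nat.xor_lt_two_pow hj hi), mk_mul_mk]
      rcases cdE_mul_cdE hj hi with h | h <;> simp [h, cdConj_zero, neg_mk]
    · rw [cdE_succ_xor_two_pow hi, cdE_succ_xor_two_pow hj, Nat.xor_comm j, Nat.xor_assoc,
        Nat.xor_xor_cancel_left, Nat.xor_comm, cdE_succ_of_lt (Nat.xor_lt_two_pow hj hi),
        mk_mul_mk]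
      rcases cdConj_cdE hi with h | h <;> rcases cdE_mul_cdE hj hi with h' | h' <;>
        simp [h, h', cdConj_zero, neg_mk]

theorem cdE_ne_zero (hi : i < 2 ^ n) : cdE n i ≠ 0 := fun h =>
  one_ne_zero (by rw [← cdE_mul_cdConj hi, h, zero_mul] : (1 : CD n) = 0)

theorem cdE_ne_neg_self (hi : i < 2 ^ n) : cdE n i ≠ -cdE n i := fun h => by
  have h2 : (2 : ℝ) • cdE n i = 0 := by rw [two_smul, ← eq_neg_iff_add_eq_zero]; exact h
  exact cdE_ne_zero hi ((smul_eq_zero.mp h2).resolve_left two_ne_zero)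

theorem eq_of_cdE_eq_or_eq_neg : ∀ {n i j : ℕ}, i < 2 ^ n → j < 2 ^ n →
    cdE n i = cdE n j ∨ cdE n i = -cdE n j → i = j
  | 0, i, j, hi, hj, _ => by simp only [pow_zero, Nat.lt_one_iff] at hi hj; omega
  | n + 1, i, j, hi₁, hj₁, h => by
    rcases Nat.lt_two_pow_or_eq_xor_two_pow hi₁ with hi | ⟨i, hi, rfl⟩ <;>
    rcases Nat.lt_two_pow_or_eq_xor_two_pow hj₁ with hj | ⟨j, hj, rfl⟩ <;>
    simp only [cdE_succ_of_lt, cdE_succ_xor_two_pow, hi, hj, neg_mk, neg_zero, mk_inj,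
      and_true, true_and] at h
    · exact eq_of_cdE_eq_or_eq_neg hi hj h
    · simp [cdE_ne_zero hi] at h
    · simp [cdE_ne_zero hj, eq_comm (a := (0 : CD n))] at h
    · rw [eq_of_cdE_eq_or_eq_neg hi hj h]

end Basis

theorem e_zero : e 0 = 1 := cdE_zero

theorem e_mul_e (i j : Fin 32) : e i * e j = e ↑(i ^^^ j) ∨ e i * e j = -e ↑(i ^^^ j) := by
  rw [Fin.xor_val_of_two_pow (w := 5)]
  exact cdE_mul_cdE i.2 j.2

theorem e_mul_self {i : Fin 32} (h : i ≠ 0) : e i * e i = -1 :=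
  cdE_mul_self i.2 (Fin.val_ne_zero_iff.mpr h)

theorem eq_of_e_eq_or_eq_neg {i j : Fin 32} (h : e i = e j ∨ e i = -e j) : i = j :=
  Fin.ext (eq_of_cdE_eq_or_eq_neg i.2 j.2 h)

theorem e_ne_neg_e (i j : Fin 32) : e i ≠ -e j := fun h => by
  obtain rfl := eq_of_e_eq_or_eq_neg (.inr h)
  exact cdE_ne_neg_self i.2 h

def signedBasis (S : Finset (Fin 32)) : Set TT := {x | ∃ i ∈ S, x = e i ∨ x = -e i}

theorem TL_eq_signedBasis_univ : TL = signedBasis Finset.univ := by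
  ext x
  simp only [TL, signedBasis, Finset.mem_univ, true_and, Set.mem_ofPred_eq]
  exact ⟨fun ⟨i, hi, h⟩ => ⟨⟨i, hi⟩, h⟩, fun ⟨i, h⟩ => ⟨i, i.2, h⟩⟩

theorem e_mem_signedBasis {S : Finset (Fin 32)} {i : Fin 32} : e i ∈ signedBasis S ↔ i ∈ S :=
  ⟨fun ⟨_, hj, h⟩ => eq_of_e_eq_or_eq_neg h ▸ hj, fun h => ⟨i, h, .inl rfl⟩⟩

theorem signedBasis_injective : Function.Injective signedBasis := fun S T h => by
  ext i
  rw [← e_mem_signedBasis, h, e_mem_signedBasis]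

theorem ncard_signedBasis (S : Finset (Fin 32)) : (signedBasis S).ncard = 2 * S.card := by
  have hunion : signedBasis S = (fun i : Fin 32 => e i) '' S ∪ (fun i : Fin 32 => -e i) '' S := by
    ext x
    simp only [signedBasis, Set.mem_ofPred_eq, Set.mem_union, Set.mem_image, Finset.mem_coe,
      eq_comm (b := x), ← exists_or, and_or_left]
  have hinj : Function.Injective fun i : Fin 32 => e i := fun i j h =>
    eq_of_e_eq_or_eq_neg (.inl h)
  have hinj' : Function.Injective fun i : Fin 32 => -e i := fun i j h =>
    eq_of_e_eq_or_eq_neg (.inl (neg_injective h))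
  have hdisj : Disjoint ((fun i : Fin 32 => e i) '' S) ((fun i : Fin 32 => -e i) '' S) := by
    rw [Set.disjoint_left]
    rintro _ ⟨i, -, rfl⟩ ⟨j, -, h⟩
    exact e_ne_neg_e i j h.symm
  rw [hunion, Set.ncard_union_eq hdisj, Set.ncard_image_of_injective _ hinj,
    Set.ncard_image_of_injective _ hinj', Set.ncard_coe_finset, two_mul]

def XorClosed (S : Finset (Fin 32)) : Prop := 0 ∈ S ∧ ∀ i ∈ S, ∀ j ∈ S, i ^^^ j ∈ S

theorem isSubloop_signedBasis {S : Finset (Fin 32)} (hS : XorClosed S) :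
    IsSubloop (signedBasis S) := by
  refine ⟨?_, ⟨e 0, e_mem_signedBasis.mpr hS.1⟩, ?_⟩
  · rw [TL_eq_signedBasis_univ]
    exact fun x ⟨i, _, h⟩ => ⟨i, Finset.mem_univ i, h⟩
  · rintro x ⟨i, hi, hx⟩ y ⟨j, hj, hy⟩
    exact ⟨i ^^^ j, hS.2 i hi j hj, eq_or_eq_neg_trans (eq_or_eq_neg_mul hx hy) (e_mul_e i j)⟩

theorem signedBasis_singleton_zero : signedBasis {0} = {e 0, -e 0} := by
  ext x
  simp [signedBasis]

namespace IsSubloop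

variable {N : Set TT} {x : TT}

theorem exists_eq_e_or_eq_neg_e (hN : IsSubloop N) (hx : x ∈ N) :
    ∃ i : Fin 32, x = e i ∨ x = -e i := by
  obtain ⟨i, -, h⟩ := (TL_eq_signedBasis_univ ▸ hN.1) hx
  exact ⟨i, h⟩

theorem e_mul_self_mem (hN : IsSubloop N) {i : Fin 32} (hx : x ∈ N) (hi : x = e i ∨ x = -e i) :
    e i * e i ∈ N := by
  rcases hi with rfl | rfl
  exacts [hN.2.2 _ hx _ hx, neg_mul_neg (e i) (e i) ▸ hN.2.2 _ hx _ hx]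

theorem one_mem (hN : IsSubloop N) : 1 ∈ N := by
  obtain ⟨x, hx⟩ := hN.2.1
  obtain ⟨i, hi⟩ := hN.exists_eq_e_or_eq_neg_e hx
  have hsq := hN.e_mul_self_mem hx hi
  rcases eq_or_ne i 0 with rfl | h0
  · simpa [e_zero] using hsq
  · rw [e_mul_self h0] at hsq
    simpa using hN.2.2 _ hsq _ hsq

theorem neg_one_mem (hN : IsSubloop N) (h1 : N ≠ {1}) : -1 ∈ N := by
  obtain ⟨x, hx, hx1⟩ : ∃ x ∈ N, x ≠ 1 := by
    by_contra! h
    exact h1 (Set.eq_singleton_iff_unique_mem.mpr ⟨hN.one_mem, h⟩)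
  obtain ⟨i, hi⟩ := hN.exists_eq_e_or_eq_neg_e hx
  rcases eq_or_ne i 0 with rfl | h0
  · rw [Fin.val_zero, e_zero] at hi
    exact hi.resolve_left hx1 ▸ hx
  · exact e_mul_self h0 ▸ hN.e_mul_self_mem hx hi

theorem eq_signedBasis (hN : IsSubloop N) (h1 : N ≠ {1}) :
    ∃ S, XorClosed S ∧ N = signedBasis S := by
  classical
  have hmem {x y : TT} (hxy : x = y ∨ x = -y) (hy : y ∈ N) : x ∈ N := by
    rcases hxy with rfl | rfl
    exacts [hy, neg_one_mul y ▸ hN.2.2 _ (hN.neg_one_mem h1) _ hy]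
  refine ⟨Finset.univ.filter (fun i => e i ∈ N), ⟨?_, fun i hi j hj => ?_⟩, ?_⟩
  · simpa [e_zero] using hN.one_mem
  · simp only [Finset.mem_filter, Finset.mem_univ, true_and] at hi hj ⊢
    exact hmem (eq_or_eq_neg_comm.mp (e_mul_e i j)) (hN.2.2 _ hi _ hj)
  · ext x
    refine ⟨fun hx => ?_, fun ⟨i, hi, hx⟩ => hmem hx (Finset.mem_filter.mp hi).2⟩
    obtain ⟨i, hi⟩ := hN.exists_eq_e_or_eq_neg_e hx
    exact ⟨i, Finset.mem_filter.mpr ⟨Finset.mem_univ i, hmem (eq_or_eq_neg_comm.mp hi) hx⟩, hi⟩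

end IsSubloop

theorem setOf_isSubloop_ncard_eq_two_mul {k : ℕ} (hk : k ≠ 0) :
    {N : Set TT | IsSubloop N ∧ N.ncard = 2 * k} =
      signedBasis '' {S | XorClosed S ∧ S.card = k} := by
  ext N
  constructor
  · rintro ⟨hN, hcard⟩
    rcases eq_or_ne N {1} with rfl | h1
    · rw [Set.ncard_singleton] at hcard
      omega
    · obtain ⟨S, hS, rfl⟩ := hN.eq_signedBasis h1
      exact ⟨S, ⟨hS, by rw [ncard_signedBasis] at hcard; omega⟩, rfl⟩
  · rintro ⟨S, ⟨hS, rfl⟩, rfl⟩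
    exact ⟨isSubloop_signedBasis hS, ncard_signedBasis S⟩

theorem setOf_xorClosed_card_one : {S | XorClosed S ∧ S.card = 1} = {{0}} := by
  ext S
  refine ⟨fun ⟨hS, hcard⟩ => ?_, ?_⟩
  · obtain ⟨a, rfl⟩ := Finset.card_eq_one.mp hcard
    rw [Finset.mem_singleton.mp hS.1]
    rfl
  · rintro rfl
    refine ⟨⟨Finset.mem_singleton_self 0, ?_⟩, Finset.card_singleton 0⟩
    simp

theorem xorClosed_pair (a : Fin 32) : XorClosed {0, a} := by
  refine ⟨by simp, ?_⟩
  simp only [Finset.mem_insert, Finset.mem_singleton]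
  rintro i (rfl | rfl) j (rfl | rfl) <;> simp [Fin.zero_xor]

theorem setOf_xorClosed_card_two :
    {S | XorClosed S ∧ S.card = 2} =
      (fun a : Fin 32 => {0, a}) '' ↑(Finset.univ.erase (0 : Fin 32)) := by
  ext S
  refine ⟨fun ⟨hS, hcard⟩ => ?_, ?_⟩
  · obtain ⟨a, b, hab, rfl⟩ := Finset.card_eq_two.mp hcard
    rcases (by simpa using hS.1 : 0 = a ∨ 0 = b) with rfl | rfl
    · exact ⟨b, by simpa using hab.symm, rfl⟩
    · exact ⟨a, by simpa using hab, Finset.pair_comm _ _⟩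
  · rintro ⟨a, ha, rfl⟩
    exact ⟨xorClosed_pair a, Finset.card_pair (by simpa [eq_comm] using ha)⟩

theorem ncard_setOf_xorClosed_card_two : {S | XorClosed S ∧ S.card = 2}.ncard = 31 := by
  rw [setOf_xorClosed_card_two, Set.InjOn.ncard_image, Set.ncard_coe_finset,
    Finset.card_erase_of_mem (Finset.mem_univ _), Finset.card_univ, Fintype.card_fin]
  intro a ha b _ h
  simpa [(Finset.mem_erase.mp ha).1] using (Finset.ext_iff.mp h a).mp (by simp)

def xorSpan (p : Fin 32 × Fin 32) : Finset (Fin 32) := {0, p.1, p.2, p.1 ^^^ p.2}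

theorem xorClosed_xorSpan (p : Fin 32 × Fin 32) : XorClosed (xorSpan p) := by
  refine ⟨by simp [xorSpan], fun i hi j hj => ?_⟩
  simp only [xorSpan, Finset.mem_insert, Finset.mem_singleton] at hi hj ⊢
  rcases hi with rfl | rfl | rfl | rfl <;> rcases hj with rfl | rfl | rfl | rfl <;>
    simp [Fin.zero_xor, Fin.xor_xor_cancel_left (n := 5) rfl, Fin.xor_xor_cancel_right (n := 5) rfl,
      Fin.xor_comm p.2 p.1, Fin.xor_comm (p.1 ^^^ p.2)]

def sortedGenerators : Finset (Fin 32 × Fin 32) :=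
  Finset.univ.filter fun p => 0 < p.1 ∧ p.1 < p.2 ∧ p.2 < p.1 ^^^ p.2

set_option maxRecDepth 40000 in
theorem card_sortedGenerators : sortedGenerators.card = 155 := by decide

theorem erase_zero_xorSpan {p : Fin 32 × Fin 32} (hp : p ∈ sortedGenerators) :
    (xorSpan p).erase 0 = {p.1, p.2, p.1 ^^^ p.2} := by
  obtain ⟨h0, h1, h2⟩ := (Finset.mem_filter.mp hp).2
  refine Finset.erase_insert ?_
  simp only [Finset.mem_insert, Finset.mem_singleton, not_or]
  exact ⟨h0.ne, (h0.trans h1).ne, (h0.trans (h1.trans h2)).ne⟩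

theorem setOf_xorClosed_card_four :
    {S | XorClosed S ∧ S.card = 4} = xorSpan '' ↑sortedGenerators := by
  ext S
  refine ⟨fun ⟨hS, hcard⟩ => ?_, ?_⟩
  · have hT : (S.erase 0).card = 3 := by rw [Finset.card_erase_of_mem hS.1, hcard]
    obtain ⟨a, b, c, hab, hbc, hT⟩ := Finset.exists_lt_lt_eq_of_card_eq_three hT
    have hmem : ∀ x, x ∈ S ∧ x ≠ 0 ↔ x = a ∨ x = b ∨ x = c := fun x => by
      rw [and_comm, ← Finset.mem_erase, hT]; simp
    obtain ⟨haS, ha0⟩ := (hmem a).mpr (.inl rfl)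
    obtain ⟨hbS, hb0⟩ := (hmem b).mpr (.inr (.inl rfl))
    have hc : a ^^^ b = c := by
      obtain h | h | h := (hmem (a ^^^ b)).mp
        ⟨hS.2 a haS b hbS, mt (Fin.xor_eq_zero_iff (n := 5) rfl).mp hab.ne⟩
      · exact absurd (by rw [← Fin.xor_xor_cancel_left (n := 5) rfl a b, h, Fin.xor_self]) hb0
      · exact absurd (by rw [← Fin.xor_xor_cancel_right (n := 5) rfl b a, h, Fin.xor_self]) ha0
      · exact h
    refine ⟨(a, b), ?_, ?_⟩
    · exact Finset.mem_filter.mpr ⟨Finset.mem_univ _, Fin.pos_iff_ne_zero.mpr ha0, hab, hc ▸ hbc⟩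
    · rw [xorSpan, hc, ← hT, Finset.insert_erase hS.1]
  · rintro ⟨p, hp, rfl⟩
    refine ⟨xorClosed_xorSpan p, ?_⟩
    rw [← Finset.card_erase_add_one (by simp [xorSpan] : (0 : Fin 32) ∈ _), erase_zero_xorSpan hp]
    obtain ⟨h0, h1, h2⟩ := (Finset.mem_filter.mp hp).2
    rw [Finset.card_insert_of_notMem (by simp [h1.ne, (h1.trans h2).ne]), Finset.card_pair h2.ne]

theorem injOn_xorSpan : Set.InjOn xorSpan ↑sortedGenerators := by
  intro p hp q hq h
  have h' := congrArg (Finset.erase · 0) h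
  simp only [erase_zero_xorSpan hp, erase_zero_xorSpan hq] at h'
  obtain ⟨-, h1, h2⟩ := (Finset.mem_filter.mp hp).2
  obtain ⟨-, h1', h2'⟩ := (Finset.mem_filter.mp hq).2
  exact Prod.ext_iff.mpr (Finset.eq_of_sorted_triple_eq h1 h2 h1' h2' h')

theorem ncard_setOf_xorClosed_card_four : {S | XorClosed S ∧ S.card = 4}.ncard = 155 := by
  rw [setOf_xorClosed_card_four, injOn_xorSpan.ncard_image, Set.ncard_coe_finset,
    card_sortedGenerators]

/-- There are exactly 155 subloops of `T_L` of cardinality 8, exactly 31 of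
cardinality 4, and exactly one of cardinality 2, namely `{e 0, -e 0}`. -/
theorem stmt4 :
    {N : Set TT | IsSubloop N ∧ N.ncard = 8}.ncard = 155 ∧
    {N : Set TT | IsSubloop N ∧ N.ncard = 4}.ncard = 31 ∧
    {N : Set TT | IsSubloop N ∧ N.ncard = 2} = {{e 0, -e 0}} := by
  refine ⟨?_, ?_, ?_⟩
  · rw [setOf_isSubloop_ncard_eq_two_mul (k := 4) four_ne_zero,
      Set.ncard_image_of_injective _ signedBasis_injective, ncard_setOf_xorClosed_card_four]
  · rw [setOf_isSubloop_ncard_eq_two_mul (k := 2) two_ne_zero,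
      Set.ncard_image_of_injective _ signedBasis_injective, ncard_setOf_xorClosed_card_two]
  · rw [setOf_isSubloop_ncard_eq_two_mul (k := 1) one_ne_zero, setOf_xorClosed_card_one,
      Set.image_singleton, signedBasis_singleton_zero]
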